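/- Let P ⊆ ℤ₊ be an infinite arithmetic progression and let M : P → ℂ be a function of geometric type, i.e. M(ν) = (Σ_{i=1}^k a_i α_i^ν)/(Σ_{j=1}^l b_j β_j^ν) for complex numbers a_i, α_i, b_j, β_j with nonzero denominator for every ν ∈ P. If M is integer-valued and M(ν) has a finite limit L ∈ ℂ as ν → ∞ along P, then M is the constant function with value L (in particular L is an integer). -/

import Mathlib

/-!
An integer-valued sequence converging in `ℂ` is eventually equal to its limit `L`, because `ℤ` is
closed and discrete in `ℂ`. So the exponential sum `∑ aᵢ αᵢⁿ - L ∑ bⱼ βⱼⁿ` vanishes at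
`n = s + ν d` for all large `ν`. As a sum in `ν` it has bases `αᵢ ^ d`, `βⱼ ^ d`; by Dedekind's
independence of the characters `ν ↦ z ^ ν`, vanishing on a tail forces the coefficients of all
nonzero bases to cancel, while `s ≥ 1` kills the terms with zero base. Hence it vanishes for
every `ν`, i.e. `M = L` on the whole progression.
-/

open Filter Topology

theorem Filter.Tendsto.eventually_eq_of_forall_eq_intCast {α : Type*} {l : Filter α} [l.NeBot]
    {f : α → ℂ} {L : ℂ} (hf : Tendsto f l (𝓝 L)) (hint : ∀ x, ∃ m : ℤ, f x = m) :
    ∀ᶠ x in l, f x = L := by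
  choose m hm using hint
  have hcast : IsClosedEmbedding ((↑) : ℤ → ℂ) := Complex.isometry_intCast.isClosedEmbedding
  have hmL : Tendsto (fun x => (m x : ℂ)) l (𝓝 L) := by simpa only [← hm] using hf
  obtain ⟨n, rfl⟩ : L ∈ Set.range ((↑) : ℤ → ℂ) :=
    hcast.isClosed_range.mem_of_tendsto hmL (.of_forall fun x => Set.mem_range_self _)
  have hmn : Tendsto m l (pure n) := by
    rw [← nhds_discrete]
    exact hcast.tendsto_nhds_iff.mpr hmL
  filter_upwards [tendsto_pure.mp hmn] with x hx
  rw [hm, hx]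

section ExponentialSums

variable {R : Type*} [CommRing R] [IsDomain R]

theorem linearIndependent_fun_pow : LinearIndependent R (fun (z : R) (n : ℕ) => z ^ n) :=
  ((linearIndependent_monoidHom (Multiplicative ℕ) R).comp (powersHom R)
    (powersHom R).injective).map' (LinearEquiv.funCongrLeft R R Multiplicative.ofAdd).toLinearMap
    (LinearEquiv.ker _)

theorem Finset.eq_zero_of_eventually_sum_mul_pow_eq_zero {s : Finset R} {C : R → R}
    (h : ∀ᶠ n in atTop, ∑ z ∈ s, C z * z ^ n = 0) {z : R} (hzs : z ∈ s) (hz : z ≠ 0) :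
    C z = 0 := by
  obtain ⟨N, hN⟩ := eventually_atTop.mp h
  have hshift : ∑ w ∈ s, (C w * w ^ N) • (fun n : ℕ => w ^ n) = 0 := by
    funext n
    rw [Finset.sum_apply, Pi.zero_apply, ← hN (N + n) (Nat.le_add_right N n)]
    refine Finset.sum_congr rfl fun w _ => ?_
    rw [Pi.smul_apply, smul_eq_mul, pow_add, mul_assoc]
  have hCN : C z * z ^ N = 0 :=
    linearIndependent_iff'.mp (linearIndependent_fun_pow (R := R)) s _ hshift z hzs
  exact (mul_eq_zero.mp hCN).resolve_right (pow_ne_zero N hz)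

omit [IsDomain R] in
theorem sum_mul_pow_eq_sum_fiber_mul_pow {ι : Type*} [Fintype ι] [DecidableEq R]
    (c γ : ι → R) (n : ℕ) :
    ∑ t, c t * γ t ^ n = ∑ z ∈ Finset.univ.image γ, (∑ t with γ t = z, c t) * z ^ n := by
  rw [← Finset.sum_fiberwise_of_maps_to fun t _ => Finset.mem_image_of_mem γ (Finset.mem_univ t)]
  refine Finset.sum_congr rfl fun z _ => ?_
  rw [Finset.sum_mul]
  exact Finset.sum_congr rfl fun t ht => by rw [(Finset.mem_filter.mp ht).2]

theorem sum_mul_pow_eq_zero_of_eventually {ι : Type*} [Fintype ι] {c γ : ι → R}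
    (hc : ∀ t, γ t = 0 → c t = 0) (h : ∀ᶠ n in atTop, ∑ t, c t * γ t ^ n = 0) (n : ℕ) :
    ∑ t, c t * γ t ^ n = 0 := by
  classical
  simp_rw [sum_mul_pow_eq_sum_fiber_mul_pow c γ] at h ⊢
  refine Finset.sum_eq_zero fun z hz => ?_
  rcases eq_or_ne z 0 with rfl | hz0
  · rw [Finset.sum_eq_zero fun t ht => hc t (Finset.mem_filter.mp ht).2, zero_mul]
  · rw [Finset.eq_zero_of_eventually_sum_mul_pow_eq_zero h hz hz0, zero_mul]

theorem sum_mul_pow_add_mul_eq_zero_of_eventually {ι : Type*} [Fintype ι] {c γ : ι → R}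
    {s d : ℕ} (hs : 0 < s) (h : ∀ᶠ ν in atTop, ∑ t, c t * γ t ^ (s + ν * d) = 0) (ν : ℕ) :
    ∑ t, c t * γ t ^ (s + ν * d) = 0 := by
  have hprog : ∀ ν, ∑ t, c t * γ t ^ (s + ν * d) = ∑ t, (c t * γ t ^ s) * (γ t ^ d) ^ ν :=
    fun ν => Finset.sum_congr rfl fun t _ => by rw [pow_add, mul_comm ν d, pow_mul, mul_assoc]
  simp only [hprog] at h ⊢
  refine sum_mul_pow_eq_zero_of_eventually (fun t ht => ?_) h ν
  rw [eq_zero_of_pow_eq_zero ht, zero_pow hs.ne', mul_zero]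

end ExponentialSums

theorem geometric_type_integer_valued_with_limit_is_constant_general
    (s d : ℕ) (hs : 1 ≤ s) (M : ℕ → ℂ)
    (k l : ℕ) (a α : Fin k → ℂ) (b β : Fin l → ℂ)
    (hden : ∀ ν : ℕ, (∑ j, b j * β j ^ (s + ν * d)) ≠ 0)
    (hM : ∀ ν : ℕ, M (s + ν * d) =
      (∑ i, a i * α i ^ (s + ν * d)) / (∑ j, b j * β j ^ (s + ν * d)))
    (hint : ∀ ν : ℕ, ∃ m : ℤ, M (s + ν * d) = (m : ℂ))
    (L : ℂ)
    (hlim : Filter.Tendsto (fun ν : ℕ => M (s + ν * d)) Filter.atTop (nhds L)) :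
    ∀ ν : ℕ, M (s + ν * d) = L := by
  set c : Fin k ⊕ Fin l → ℂ := Sum.elim a (-L • b)
  set γ : Fin k ⊕ Fin l → ℂ := Sum.elim α β
  have hsum : ∀ n, ∑ t, c t * γ t ^ n = ∑ i, a i * α i ^ n - L * ∑ j, b j * β j ^ n := fun n => by
    simp [c, γ, Fintype.sum_sum_type, Finset.mul_sum, mul_assoc, sub_eq_add_neg]
  have hMeq : ∀ ν, M (s + ν * d) = L ↔ ∑ t, c t * γ t ^ (s + ν * d) = 0 := fun ν => by
    rw [hM, div_eq_iff (hden ν), ← sub_eq_zero, hsum]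
  have htail := (hlim.eventually_eq_of_forall_eq_intCast hint).mono fun ν => (hMeq ν).mp
  exact fun ν => (hMeq ν).mpr (sum_mul_pow_add_mul_eq_zero_of_eventually hs htail ν)

/-- A function of geometric type on an arithmetic progression
`{s + ν·d : ν ∈ ℕ}` (with `s, d ≥ 1`) which is integer-valued and converges to a
finite limit `L` along the progression is the constant function `L`. -/
theorem geometric_type_integer_valued_with_limit_is_constant
    (s d : ℕ) (hs : 1 ≤ s) (hd : 1 ≤ d) (M : ℕ → ℂ)
    (k l : ℕ) (a α : Fin k → ℂ) (b β : Fin l → ℂ)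
    (hden : ∀ ν : ℕ, (∑ j, b j * β j ^ (s + ν * d)) ≠ 0)
    (hM : ∀ ν : ℕ, M (s + ν * d) =
      (∑ i, a i * α i ^ (s + ν * d)) / (∑ j, b j * β j ^ (s + ν * d)))
    (hint : ∀ ν : ℕ, ∃ m : ℤ, M (s + ν * d) = (m : ℂ))
    (L : ℂ)
    (hlim : Filter.Tendsto (fun ν : ℕ => M (s + ν * d)) Filter.atTop (nhds L)) :
    ∀ ν : ℕ, M (s + ν * d) = L :=
  geometric_type_integer_valued_with_limit_is_constant_general s d hs M k l a α b β hden hM hint L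
    hlim
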